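/- arXiv:1801.04472 — 5 statements merged into one kernel-verified Lean document; each statement's English description precedes it below -/
import Mathlib

section
/- Let G be a finite simple graph, let f be a zero-sum 3-flow of G, and let S be a nonempty set of vertices of G each of degree 3 such that the subgraph of G induced on S is connected. Then either every vertex of S is incident with an edge labeled 2, or every vertex of S is incident with an edge labeled −2. -/
/-- For a zero-sum 3-flow `f` of a finite simple graph `G` and a nonempty
set `S` of vertices of degree 3 inducing a connected subgraph, either every vertex of
`S` is incident with an edge labeled `2`, or every vertex of `S` is incident with an
edge labeled `-2`. -/
theorem stmt_4 {V : Type*} [Fintype V] [DecidableEq V] (G : SimpleGraph V)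
    [DecidableRel G.Adj] (f : Sym2 V → ℤ)
    (hf : ∀ e ∈ G.edgeSet, f e ∈ ({-2, -1, 1, 2} : Set ℤ))
    (hsum : ∀ v : V, ∑ e ∈ G.incidenceFinset v, f e = 0)
    (S : Set V) (hSne : S.Nonempty) (hdeg : ∀ v ∈ S, G.degree v = 3)
    (hconn : (G.induce S).Connected) :
    (∀ v ∈ S, ∃ e ∈ G.incidenceSet v, f e = 2) ∨
    (∀ v ∈ S, ∃ e ∈ G.incidenceSet v, f e = -2) := by
  have struct : ∀ v ∈ S,
      ((∃ e ∈ G.incidenceSet v, f e = 2) ∧ ∀ e ∈ G.incidenceSet v, f e = 2 ∨ f e = -1) ∨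
      ((∃ e ∈ G.incidenceSet v, f e = -2) ∧ ∀ e ∈ G.incidenceSet v, f e = -2 ∨ f e = 1) := by
    intro v hv
    have hcard : (G.incidenceFinset v).card = 3 := by
      rw [G.card_incidenceFinset_eq_degree]; exact hdeg v hv
    obtain ⟨a, b, c, hab, hac, hbc, hs⟩ := Finset.card_eq_three.mp hcard
    have hsumv := hsum v
    rw [hs, Finset.sum_insert (by simp [hab, hac]),
      Finset.sum_insert (by simp [hbc]), Finset.sum_singleton] at hsumv
    have ha : a ∈ G.incidenceSet v := by
      rw [← SimpleGraph.mem_incidenceFinset, hs]; simp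
    have hb : b ∈ G.incidenceSet v := by
      rw [← SimpleGraph.mem_incidenceFinset, hs]; simp
    have hc : c ∈ G.incidenceSet v := by
      rw [← SimpleGraph.mem_incidenceFinset, hs]; simp
    have hfa := hf a ha.1
    have hfb := hf b hb.1
    have hfc := hf c hc.1
    simp only [Set.mem_insert_iff, Set.mem_singleton_iff] at hfa hfb hfc
    have hall : ∀ e ∈ G.incidenceSet v, e = a ∨ e = b ∨ e = c := by
      intro e he
      have : e ∈ G.incidenceFinset v := (G.mem_incidenceFinset v e).mpr he
      rw [hs] at this; simpa using this
    have harith : ((f a = 2 ∨ f b = 2 ∨ f c = 2) ∧ (f a = 2 ∨ f a = -1) ∧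
        (f b = 2 ∨ f b = -1) ∧ (f c = 2 ∨ f c = -1)) ∨
        ((f a = -2 ∨ f b = -2 ∨ f c = -2) ∧ (f a = -2 ∨ f a = 1) ∧
        (f b = -2 ∨ f b = 1) ∧ (f c = -2 ∨ f c = 1)) := by omega
    rcases harith with ⟨hex, h1, h2, h3⟩ | ⟨hex, h1, h2, h3⟩
    · left
      refine ⟨?_, ?_⟩
      · rcases hex with h | h | h
        exacts [⟨a, ha, h⟩, ⟨b, hb, h⟩, ⟨c, hc, h⟩]
      · intro e he; rcases hall e he with rfl | rfl | rfl <;> assumption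
    · right
      refine ⟨?_, ?_⟩
      · rcases hex with h | h | h
        exacts [⟨a, ha, h⟩, ⟨b, hb, h⟩, ⟨c, hc, h⟩]
      · intro e he; rcases hall e he with rfl | rfl | rfl <;> assumption
  -- adjacency step
  have step : ∀ u ∈ S, ∀ w ∈ S, G.Adj u w →
      ((∃ e ∈ G.incidenceSet u, f e = 2) ∧ ∀ e ∈ G.incidenceSet u, f e = 2 ∨ f e = -1) →
      ((∃ e ∈ G.incidenceSet w, f e = 2) ∧ ∀ e ∈ G.incidenceSet w, f e = 2 ∨ f e = -1) := by
    intro u hu w hw hadj hL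
    rcases struct w hw with h | h
    · exact h
    · exfalso
      have heu : s(u, w) ∈ G.incidenceSet u := ⟨hadj, by simp⟩
      have hew : s(u, w) ∈ G.incidenceSet w := ⟨hadj, by simp⟩
      have h1 := hL.2 _ heu
      have h2 := h.2 _ hew
      omega
  -- propagate along walks in the induced graph
  have prop : ∀ (x y : S), ((G.induce S).Walk x y) →
      ((∃ e ∈ G.incidenceSet x.1, f e = 2) ∧ ∀ e ∈ G.incidenceSet x.1, f e = 2 ∨ f e = -1) →
      ((∃ e ∈ G.incidenceSet y.1, f e = 2) ∧ ∀ e ∈ G.incidenceSet y.1, f e = 2 ∨ f e = -1) := by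
    intro x y p
    induction p with
    | nil => exact id
    | cons h _ ih =>
      intro hx
      exact ih (step _ (by exact Subtype.coe_prop _) _ (by exact Subtype.coe_prop _) h hx)
  obtain ⟨v0, hv0⟩ := hSne
  rcases struct v0 hv0 with h0 | h0
  · left
    intro v hv
    obtain ⟨p⟩ := hconn.preconnected ⟨v0, hv0⟩ ⟨v, hv⟩
    exact (prop _ _ p h0).1
  · right
    intro v hv
    rcases struct v hv with h | h
    · exfalso
      obtain ⟨p⟩ := hconn.preconnected ⟨v, hv⟩ ⟨v0, hv0⟩
      have := (prop _ _ p h).2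
      obtain ⟨e, he, hfe⟩ := h0.1
      have := this e he
      omega
    · exact h.1
end

section
/- Fix an integer r ≥ 3 and Boolean variables α₁, …, α_{r−1} and ε₁, …, ε_{r−1} (all distinct). Consider the r clauses: for each i with 1 ≤ i ≤ r−1 the clause consisting of the r variables {ε_i, α₁, …, α_{r−1}}, together with the clause consisting of the r variables {α₁, ε₁, …, ε_{r−1}}. Then any truth assignment Γ under which each of these r clauses contains exactly one true variable satisfies Γ(α₁) = true, Γ(α_i) = false for all 2 ≤ i ≤ r−1, and Γ(ε_j) = false for all 1 ≤ j ≤ r−1. -/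
/-- Fix `r ≥ 3` and distinct Boolean variables `α 0, …, α (r-2)` and
`ε 0, …, ε (r-2)` (so `α i` plays the role of `α_{i+1}` etc.).  Consider the `r`
clauses: for each `i`, the clause `{ε i} ∪ {α 0, …, α (r-2)}`, together with the
clause `{α 0} ∪ {ε 0, …, ε (r-2)}`.  If under a truth assignment `Γ` each of these
clauses contains exactly one true variable, then `Γ (α 0) = true`, `Γ (α i) = false`
for `i ≠ 0`, and `Γ (ε j) = false` for all `j`. -/
theorem stmt_6 {X : Type*} [DecidableEq X] (r : ℕ) (hr : 3 ≤ r)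
    (α ε : Fin (r - 1) → X)
    (hαinj : Function.Injective α) (hεinj : Function.Injective ε)
    (hdisj : ∀ i j : Fin (r - 1), α i ≠ ε j)
    (Γ : X → Bool)
    (hclauses : ∀ i : Fin (r - 1),
      ((insert (ε i) (Finset.image α Finset.univ)).filter (fun x => Γ x = true)).card = 1)
    (hlast :
      ((insert (α ⟨0, by omega⟩) (Finset.image ε Finset.univ)).filter
        (fun x => Γ x = true)).card = 1) :
    Γ (α ⟨0, by omega⟩) = true ∧
    (∀ i : Fin (r - 1), i ≠ ⟨0, by omega⟩ → Γ (α i) = false) ∧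
    (∀ j : Fin (r - 1), Γ (ε j) = false) := by
  have key : ∀ (s : Finset X), (s.filter (fun x => Γ x = true)).card = 1 →
      ∃ a ∈ s, Γ a = true ∧ ∀ b ∈ s, Γ b = true → b = a := by
    intro s hs
    obtain ⟨a, ha⟩ := Finset.card_eq_one.mp hs
    have haa : a ∈ s.filter (fun x => Γ x = true) := ha ▸ Finset.mem_singleton_self a
    simp only [Finset.mem_filter] at haa
    exact ⟨a, haa.1, haa.2, fun b hb hΓb => by
      have : b ∈ s.filter (fun x => Γ x = true) := Finset.mem_filter.mpr ⟨hb, hΓb⟩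
      rwa [ha, Finset.mem_singleton] at this⟩
  have hz : 0 < r - 1 := by omega
  have hαmem : ∀ (i k : Fin (r-1)), α k ∈ insert (ε i) (Finset.image α Finset.univ) := by
    intro i k; exact Finset.mem_insert_of_mem (Finset.mem_image_of_mem α (Finset.mem_univ k))
  have hεmem : ∀ (j : Fin (r-1)),
      ε j ∈ insert (α ⟨0, by omega⟩) (Finset.image ε Finset.univ) := by
    intro j; exact Finset.mem_insert_of_mem (Finset.mem_image_of_mem ε (Finset.mem_univ j))
  have hexk : ∃ k, Γ (α k) = true := by
    by_contra h
    push_neg at h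
    have hεtrue : ∀ j, Γ (ε j) = true := by
      intro j
      obtain ⟨a, has, hat, huniq⟩ := key _ (hclauses j)
      rcases Finset.mem_insert.mp has with h1 | h1
      · rw [← h1]; exact hat
      · obtain ⟨k, _, hk⟩ := Finset.mem_image.mp h1
        exact absurd (hk ▸ hat) (by simp [h k])
    obtain ⟨a, has, hat, huniq⟩ := key _ hlast
    have h0 : ε ⟨0, by omega⟩ = a := huniq _ (hεmem _) (hεtrue _)
    have h1 : ε ⟨1, by omega⟩ = a := huniq _ (hεmem _) (hεtrue _)
    have := hεinj (h0.trans h1.symm)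
    simp [Fin.ext_iff] at this
  obtain ⟨k, hk⟩ := hexk
  have hεfalse : ∀ j, Γ (ε j) = false := by
    intro j
    obtain ⟨a, has, hat, huniq⟩ := key _ (hclauses j)
    have hak : α k = a := huniq _ (hαmem j k) hk
    by_contra h
    have hεt : Γ (ε j) = true := by simpa using h
    have : ε j = a := huniq _ (Finset.mem_insert_self _ _) hεt
    exact hdisj k j (hak.trans this.symm)
  obtain ⟨b, hbs, hbt, hbuniq⟩ := key _ hlast
  have hb : b = α ⟨0, by omega⟩ := by
    rcases Finset.mem_insert.mp hbs with h1 | h1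
    · exact h1
    · obtain ⟨j, _, hj⟩ := Finset.mem_image.mp h1
      rw [← hj, hεfalse j] at hbt
      exact absurd hbt (by simp)
  have hα0 : Γ (α ⟨0, by omega⟩) = true := hb ▸ hbt
  refine ⟨hα0, ?_, hεfalse⟩
  intro i hi
  by_contra h
  have hit : Γ (α i) = true := by simpa using h
  obtain ⟨a, has, hat, huniq⟩ := key _ (hclauses ⟨0, by omega⟩)
  have h1 : α i = a := huniq _ (hαmem _ i) hit
  have h2 : α ⟨0, by omega⟩ = a := huniq _ (hαmem _ _) hα0
  exact hi (hαinj (h1.trans h2.symm))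
end

section
/- Let G be a finite simple graph and let f be a function from the vertices of G to {true, false} such that every vertex of G has exactly one neighbor u with f(u) = true. Suppose s and s' are vertices of G, R is a set of vertices, and k, k' are vertices with k ∉ R and k' ∉ R, such that the neighborhood of s equals {k} ∪ R and the neighborhood of s' equals {k'} ∪ R. Then f(k) = f(k'). -/
lemma stmt_7_aux {V : Type*} (G : SimpleGraph V) (f : V → Bool)
    (hf : ∀ v : V, ∃! u : V, G.Adj v u ∧ f u = true)
    (s : V) (R : Set V) (k : V) (hk : k ∉ R)
    (hs : G.neighborSet s = {k} ∪ R) :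
    f k = true ↔ ¬∃ r ∈ R, f r = true := by
  have hadj : ∀ x, G.Adj s x ↔ x = k ∨ x ∈ R := by
    intro x
    have : x ∈ G.neighborSet s ↔ x ∈ ({k} ∪ R : Set V) := by rw [hs]
    simpa [Set.mem_union] using this
  constructor
  · rintro hfk ⟨r, hrR, hr⟩
    obtain ⟨u, _, huniq⟩ := hf s
    have hur : r = u := huniq r ⟨(hadj r).2 (Or.inr hrR), hr⟩
    have hku : k = u := huniq k ⟨(hadj k).2 (Or.inl rfl), hfk⟩
    exact hk (hku ▸ hur ▸ hrR)
  · intro h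
    obtain ⟨u, ⟨hu1, hu2⟩, _⟩ := hf s
    rcases (hadj u).1 hu1 with huk | huR
    · exact huk ▸ hu2
    · exact absurd ⟨u, huR, hu2⟩ h

/-- Let `f : V → Bool` be such that every vertex of `G` has exactly one
neighbor `u` with `f u = true`.  If `N(s) = {k} ∪ R` and `N(s') = {k'} ∪ R` with
`k, k' ∉ R`, then `f k = f k'`. -/
theorem stmt_7 {V : Type*} [Fintype V] (G : SimpleGraph V) (f : V → Bool)
    (hf : ∀ v : V, ∃! u : V, G.Adj v u ∧ f u = true)
    (s s' : V) (R : Set V) (k k' : V) (hk : k ∉ R) (hk' : k' ∉ R)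
    (hs : G.neighborSet s = {k} ∪ R) (hs' : G.neighborSet s' = {k'} ∪ R) :
    f k = f k' := by
  rw [Bool.eq_iff_iff, stmt_7_aux G f hf s R k hk hs,
    stmt_7_aux G f hf s' R k' hk' hs']
end

section
/- Let G be a finite connected simple graph in which every vertex has degree at least 2 and some vertex has degree at least 3. Then G has a NAE edge coloring. -/
namespace NAEColoringProof

open SimpleGraph Walk

variable {V : Type*} [DecidableEq V] {G : SimpleGraph V}

/-- Recolor the edges of a walk alternately, starting with color `β` on the first edge. -/
def recolor (f : Sym2 V → Bool) : ∀ {u v : V}, G.Walk u v → Bool → Sym2 V → Bool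
  | _, _, Walk.nil, _ => f
  | _, _, @Walk.cons _ _ u x _ _ p, β => Function.update (recolor f p (!β)) s(u, x) β

lemma recolor_not_mem {f : Sym2 V → Bool} {u v : V} {p : G.Walk u v} {β : Bool} {e : Sym2 V}
    (he : e ∉ p.edges) : recolor f p β e = f e := by
  induction p generalizing β with
  | nil => rfl
  | cons h q ih =>
    rw [edges_cons, List.mem_cons] at he
    push_neg at he
    simp only [recolor, Function.update_of_ne he.1]
    exact ih he.2

lemma recolor_first {f : Sym2 V → Bool} {u x v : V} (h : G.Adj u x) (p : G.Walk x v) (β : Bool) :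
    recolor f (Walk.cons h p) β s(u, x) = β := by
  simp [recolor]

/-- The color of the last edge of a walk of length `L` recolored starting with `β`. -/
def endCol (β : Bool) (L : ℕ) : Bool := if L % 2 = 1 then β else !β

lemma endCol_succ (β : Bool) (L : ℕ) : endCol β (L + 1) = endCol (!β) L := by
  rcases Nat.mod_two_eq_zero_or_one L with h | h
  · have h2 : (L + 1) % 2 = 1 := by omega
    simp [endCol, h, h2]
  · have h2 : (L + 1) % 2 = 0 := by omega
    simp [endCol, h, h2]

lemma mem_support_of_mem_edge {u v : V} {p : G.Walk u v} {e : Sym2 V} (he : e ∈ p.edges)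
    {a : V} (ha : a ∈ e) : a ∈ p.support := by
  induction e with
  | _ b c =>
    rcases Sym2.mem_iff.mp ha with rfl | rfl
    · exact p.fst_mem_support_of_mem_edges he
    · exact p.snd_mem_support_of_mem_edges he

lemma recolor_last {f : Sym2 V → Bool} {u v : V} (p : G.Walk u v) (hp : p.IsPath)
    (hl : 1 ≤ p.length) (β : Bool) :
    ∃ e, e ∈ p.edges ∧ v ∈ e ∧ recolor f p β e = endCol β p.length := by
  induction p generalizing β with
  | nil => simp at hl
  | @cons a b c h q ih =>
    cases q with
    | nil =>
      refine ⟨s(a, b), by simp, by simp, ?_⟩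
      rw [recolor_first]
      simp [endCol]
    | @cons b z c h' r =>
      obtain ⟨e, he, hve, hcol⟩ := ih hp.of_cons (by simp) (!β)
      refine ⟨e, by rw [edges_cons]; exact List.mem_cons_of_mem _ he, hve, ?_⟩
      have hu : a ∉ e := fun hu => ((cons_isPath_iff h _).mp hp).2 (mem_support_of_mem_edge he hu)
      have hne : e ≠ s(a, b) := fun hee => hu (hee ▸ Sym2.mem_mk_left a b)
      rw [length_cons, endCol_succ, ← hcol]
      simp only [recolor, Function.update_of_ne hne]

lemma recolor_interior {f : Sym2 V → Bool} {u v : V} (p : G.Walk u v) (hp : p.IsPath)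
    {x : V} (hx : x ∈ p.support) (hxu : x ≠ u) (hxv : x ≠ v) (β col : Bool) :
    ∃ e, e ∈ p.edges ∧ x ∈ e ∧ recolor f p β e = col := by
  induction p generalizing β with
  | nil => simp at hx; exact absurd hx hxu
  | @cons a b c h q ih =>
    have hup : a ∉ q.support := ((cons_isPath_iff h _).mp hp).2
    have hxq : x ∈ q.support := by
      rcases List.mem_cons.mp (support_cons h q ▸ hx) with h' | h'
      · exact absurd h' hxu
      · exact h'
    by_cases hxy : x = b
    · subst hxy
      cases q with
      | nil => exact absurd rfl hxv
      | @cons b z c h' r =>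
        have hne : s(x, z) ≠ s(a, x) := by
          intro hee
          have : a ∈ s(x, z) := hee ▸ Sym2.mem_mk_left a x
          rcases Sym2.mem_iff.mp this with rfl | rfl
          · exact h.ne rfl
          · exact hup (by simp)
        by_cases hcol : col = β
        · exact ⟨s(a, x), by simp, by simp, by rw [recolor_first]; exact hcol.symm⟩
        · refine ⟨s(x, z), by simp [edges_cons], by simp, ?_⟩
          have hstep : recolor f (Walk.cons h (Walk.cons h' r)) β s(x, z)
              = recolor f (Walk.cons h' r) (!β) s(x, z) := by
            simp only [recolor, Function.update_of_ne hne]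
          rw [hstep, recolor_first]
          cases β <;> cases col <;> simp_all
    · obtain ⟨e, he, hxe, hcol⟩ := ih hp.of_cons hxq hxy hxv (!β)
      refine ⟨e, by rw [edges_cons]; exact List.mem_cons_of_mem _ he, hxe, ?_⟩
      have hu : a ∉ e := fun hu => hup (mem_support_of_mem_edge he hu)
      have hne : e ≠ s(a, b) := fun hee => hu (hee ▸ Sym2.mem_mk_left a b)
      rw [← hcol]
      simp only [recolor, Function.update_of_ne hne]

set_option linter.unusedSectionVars false

lemma edge_at_start_unique {u v : V} {p : G.Walk u v} (hp : p.IsPath) {e e' : Sym2 V}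
    (he : e ∈ p.edges) (he' : e' ∈ p.edges) (hu : u ∈ e) (hu' : u ∈ e') : e = e' := by
  cases p with
  | nil => simp at he
  | @cons _ b _ h q =>
    have key : ∀ e₀ : Sym2 V, e₀ ∈ (Walk.cons h q).edges → u ∈ e₀ → e₀ = s(u, b) := by
      intro e₀ he₀ ha
      rcases List.mem_cons.mp (edges_cons h q ▸ he₀) with h' | h'
      · exact h'
      · exact absurd (mem_support_of_mem_edge h' ha) ((cons_isPath_iff h q).mp hp).2
    rw [key e he hu, key e' he' hu']

lemma edge_at_end_unique {u v : V} {p : G.Walk u v} (hp : p.IsPath) {e e' : Sym2 V}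
    (he : e ∈ p.edges) (he' : e' ∈ p.edges) (hv : v ∈ e) (hv' : v ∈ e') : e = e' := by
  have hrev : ∀ e₀ : Sym2 V, e₀ ∈ p.edges → e₀ ∈ p.reverse.edges := by
    intro e₀ h₀; rw [edges_reverse]; exact List.mem_reverse.mpr h₀
  exact edge_at_start_unique hp.reverse (hrev e he) (hrev e' he') hv hv'

lemma length_pos_of_ne {u v : V} (h : u ≠ v) (p : G.Walk u v) : 1 ≤ p.length := by
  cases p with
  | nil => exact absurd rfl h
  | cons h' q => simp [length_cons]

lemma isPath_concat {u v w : V} {p : G.Walk u v} (hp : p.IsPath) (h : G.Adj v w)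
    (hw : w ∉ p.support) : (p.concat h).IsPath := by
  rw [← isPath_reverse_iff, reverse_concat]
  refine (cons_isPath_iff _ _).mpr ⟨hp.reverse, ?_⟩
  rw [support_reverse, List.mem_reverse]
  exact hw

lemma edge_other_endpoint {e : Sym2 V} (he : e ∈ G.edgeSet) (y : V) :
    ∃ x, x ∈ e ∧ x ≠ y := by
  induction e with
  | _ a b =>
    have hab : a ≠ b := (G.mem_edgeSet.mp he).ne
    by_cases hay : a = y
    · exact ⟨b, Sym2.mem_mk_right a b, fun hh => hab (hay.trans hh.symm)⟩
    · exact ⟨a, Sym2.mem_mk_left a b, hay⟩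

/-- Specification of what the path-growing step produces: a recoloring `f'`, a set `R` of
modified edges (all touching the new vertex set `M`), such that all vertices of `M` see both
colors among edges inside `M ∪ S ∪ {s}`, and the anchor `s` gets an edge colored `β` into `M`. -/
def StepSpec (G : SimpleGraph V) (S : Finset V) (f : Sym2 V → Bool) (s : V) (β : Bool)
    {c : V} (T : G.Walk s c) : Prop :=
  ∃ (f' : Sym2 V → Bool) (R : Set (Sym2 V)) (M : Finset V),
    (∀ x ∈ T.support, x ≠ s → x ∈ M) ∧
    (∀ x ∈ M, x ∉ S ∧ x ≠ s) ∧
    (∀ e ∈ R, e ∈ G.edgeSet ∧ ∃ x ∈ M, x ∈ e) ∧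
    (∀ e, e ∉ R → f' e = f e) ∧
    (∀ x ∈ M, ∀ col : Bool,
      ∃ e ∈ R, x ∈ e ∧ (∀ y ∈ e, y ∈ M ∨ y ∈ S ∨ y = s) ∧ f' e = col) ∧
    (∃ z c₂, G.Adj s z ∧ z ∈ M ∧ s(s, z) ∈ R ∧ f' s(s, z) = β ∧
      (∀ e ∈ R, s ∈ e → e = s(s, z) ∨ e = s(s, c₂)))

lemma not_s_of_ne {s : V} {T : G.Walk s s} (hT : T.IsPath) (hl : 1 ≤ T.length) : False := by
  rw [isPath_iff_eq_nil] at hT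
  simp [hT] at hl

lemma anchor_gadget (S : Finset V) (f : Sym2 V → Bool) (s : V) (β : Bool) {c d : V}
    (T : G.Walk s c) (hT : T.IsPath) (hl : 1 ≤ T.length)
    (hTS : ∀ x ∈ T.support, x ≠ s → x ∉ S)
    (hadj : G.Adj c d) (hcd : s(c, d) ∉ T.edges) (hd : d ∈ S ∨ d = s) :
    StepSpec G S f s β T := by
  have hsc : s ≠ c := by rintro rfl; exact absurd (not_s_of_ne hT hl) not_false
  obtain ⟨γ, hγ⟩ : ∃ γ, endCol β T.length = γ := ⟨_, rfl⟩
  refine ⟨Function.update (recolor f T β) s(c, d) (!γ),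
    {e | e ∈ T.edges ∨ e = s(c, d)}, T.support.toFinset.erase s, ?_, ?_, ?_, ?_, ?_, ?_⟩
  · intro x hx hxs
    exact Finset.mem_erase.mpr ⟨hxs, List.mem_toFinset.mpr hx⟩
  · intro x hx
    obtain ⟨hxs, hxsup⟩ := Finset.mem_erase.mp hx
    exact ⟨hTS x (List.mem_toFinset.mp hxsup) hxs, hxs⟩
  · rintro e (he | rfl)
    · refine ⟨T.edges_subset_edgeSet he, ?_⟩
      obtain ⟨x, hxe, hxs⟩ := edge_other_endpoint (T.edges_subset_edgeSet he) s
      exact ⟨x, Finset.mem_erase.mpr ⟨hxs, List.mem_toFinset.mpr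
        (mem_support_of_mem_edge he hxe)⟩, hxe⟩
    · exact ⟨hadj, c, Finset.mem_erase.mpr ⟨Ne.symm hsc, List.mem_toFinset.mpr
        T.end_mem_support⟩, Sym2.mem_mk_left c d⟩
  · intro e he
    simp only [Set.mem_setOf_eq, not_or] at he
    rw [Function.update_of_ne he.2, recolor_not_mem he.1]
  · intro x hx col
    obtain ⟨hxs, hxsup'⟩ := Finset.mem_erase.mp hx
    have hxsup := List.mem_toFinset.mp hxsup'
    by_cases hxc : x = c
    · subst hxc
      obtain ⟨eL, heL, hceL, hvalL⟩ := recolor_last T hT hl β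
      rw [hγ] at hvalL
      have heLne : eL ≠ s(x, d) := fun hh => hcd (hh ▸ heL)
      by_cases hcol : col = γ
      · refine ⟨eL, Or.inl heL, hceL, ?_, ?_⟩
        · intro y hy
          by_cases hys : y = s
          · exact Or.inr (Or.inr hys)
          · exact Or.inl (Finset.mem_erase.mpr ⟨hys, List.mem_toFinset.mpr
              (mem_support_of_mem_edge heL hy)⟩)
        · rw [Function.update_of_ne heLne, hvalL, hcol]
      · have hcol' : col = !γ := by revert hcol; cases col <;> cases γ <;> simp
        refine ⟨s(x, d), Or.inr rfl, Sym2.mem_mk_left x d, ?_, ?_⟩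
        · intro y hy
          rcases Sym2.mem_iff.mp hy with rfl | rfl
          · exact Or.inl hx
          · rcases hd with hd | hd
            · exact Or.inr (Or.inl hd)
            · exact Or.inr (Or.inr hd)
        · rw [Function.update_self, hcol']
    · obtain ⟨e, he, hxe, hval⟩ := recolor_interior T hT hxsup hxs hxc β col
      have hene : e ≠ s(c, d) := fun hh => hcd (hh ▸ he)
      refine ⟨e, Or.inl he, hxe, ?_, by rw [Function.update_of_ne hene]; exact hval⟩
      intro y hy
      by_cases hys : y = s
      · exact Or.inr (Or.inr hys)
      · exact Or.inl (Finset.mem_erase.mpr ⟨hys, List.mem_toFinset.mpr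
          (mem_support_of_mem_edge he hy)⟩)
  · cases T with
    | nil => simp at hl
    | @cons _ z _ h q =>
      have hfst : s(s, z) ∈ (Walk.cons h q).edges := by simp
      have hne : s(s, z) ≠ s(c, d) := fun hh => hcd (hh ▸ hfst)
      refine ⟨z, c, h, Finset.mem_erase.mpr ⟨h.ne', by simp⟩, Or.inl hfst, ?_, ?_⟩
      · rw [Function.update_of_ne hne, recolor_first]
      · rintro e (he | rfl) hse
        · exact Or.inl (edge_at_start_unique hT he hfst hse (Sym2.mem_mk_left s z))
        · rcases Sym2.mem_iff.mp hse with rfl | rfl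
          · exact absurd rfl hsc
          · exact Or.inr (Sym2.eq_swap)

lemma recolor_first' {f : Sym2 V → Bool} {u v : V} (p : G.Walk u v) (hl : 1 ≤ p.length)
    (β : Bool) : ∃ z, G.Adj u z ∧ s(u, z) ∈ p.edges ∧ recolor f p β s(u, z) = β := by
  cases p with
  | nil => simp at hl
  | cons h q => exact ⟨_, h, by simp, recolor_first h q β⟩

lemma lollipop_gadget (S : Finset V) (f : Sym2 V → Bool) (s : V) (β : Bool) {c d : V}
    (T : G.Walk s c) (hT : T.IsPath) (hl : 1 ≤ T.length)
    (hTS : ∀ x ∈ T.support, x ≠ s → x ∉ S)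
    (hadj : G.Adj c d) (hcd : s(c, d) ∉ T.edges) (hdsup : d ∈ T.support) (hds : d ≠ s) :
    StepSpec G S f s β T := by
  have hsc : s ≠ c := by rintro rfl; exact absurd (not_s_of_ne hT hl) not_false
  have hdc : d ≠ c := hadj.ne'
  set T₁ := T.takeUntil d hdsup with hT₁def
  set T₂ := T.dropUntil d hdsup with hT₂def
  have hspec : T₁.append T₂ = T := T.take_spec hdsup
  have hT₁ : T₁.IsPath := hT.takeUntil hdsup
  have hT₂ : T₂.IsPath := hT.dropUntil hdsup
  have hl₁ : 1 ≤ T₁.length := length_pos_of_ne (Ne.symm hds) T₁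
  have hl₂ : 1 ≤ T₂.length := length_pos_of_ne hdc T₂
  have hedges : T.edges = T₁.edges ++ T₂.edges := by rw [← hspec, edges_append]
  have hnodup : T.edges.Nodup := hT.isTrail.edges_nodup
  have hdisjE : ∀ e ∈ T₁.edges, e ∉ T₂.edges := by
    rw [hedges] at hnodup
    intro e he₁ he₂
    exact (List.disjoint_of_nodup_append hnodup) he₁ he₂
  have hsub₁ : ∀ e ∈ T₁.edges, e ∈ T.edges := fun e he => T.edges_takeUntil_subset hdsup he
  have hsub₂ : ∀ e ∈ T₂.edges, e ∈ T.edges := fun e he => T.edges_dropUntil_subset hdsup he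
  have hcd₁ : s(c, d) ∉ T₁.edges := fun hh => hcd (hsub₁ _ hh)
  have hcd₂ : s(c, d) ∉ T₂.edges := fun hh => hcd (hsub₂ _ hh)
  have hsupT : T.support = T₁.support ++ T₂.support.tail := by rw [← hspec, support_append]
  have hsupnd : (T₁.support ++ T₂.support.tail).Nodup := hsupT ▸ hT.support_nodup
  have hsup₁ : ∀ x ∈ T₁.support, x ∈ T.support := fun x hx => T.support_takeUntil_subset hdsup hx
  have hsup₂ : ∀ x ∈ T₂.support, x ∈ T.support := fun x hx => T.support_dropUntil_subset hdsup hx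
  have hs₂ : s ∉ T₂.support := by
    intro hh
    rw [T₂.support_eq_cons, List.mem_cons] at hh
    rcases hh with hh | hh
    · exact hds hh.symm
    · exact (List.disjoint_of_nodup_append hsupnd) T₁.start_mem_support hh
  have hc₂ : c ∉ T₁.support := by
    intro hh
    have hct : c ∈ T₂.support.tail := by
      have := T₂.end_mem_support
      rw [T₂.support_eq_cons, List.mem_cons] at this
      rcases this with h' | h'
      · exact absurd h'.symm hdc
      · exact h'
    exact (List.disjoint_of_nodup_append hsupnd) hh hct
  obtain ⟨γ₁, hγ₁⟩ : ∃ γ, endCol β T₁.length = γ := ⟨_, rfl⟩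
  obtain ⟨γ₂, hγ₂⟩ : ∃ γ, endCol (!γ₁) T₂.length = γ := ⟨_, rfl⟩
  set f₁ := recolor f T₁ β with hf₁def
  set f₂ := recolor f₁ T₂ (!γ₁) with hf₂def
  set f' := Function.update f₂ s(c, d) (!γ₂) with hf'def
  -- key values
  obtain ⟨e₁L, he₁L, hde₁L, hv₁L⟩ := recolor_last (f := f) T₁ hT₁ hl₁ β
  rw [hγ₁, ← hf₁def] at hv₁L
  obtain ⟨z₂, hz₂adj, hz₂mem, hv₂F⟩ := recolor_first' (f := f₁) T₂ hl₂ (!γ₁)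
  rw [← hf₂def] at hv₂F
  obtain ⟨e₂L, he₂L, hce₂L, hv₂L⟩ := recolor_last (f := f₁) T₂ hT₂ hl₂ (!γ₁)
  rw [hγ₂, ← hf₂def] at hv₂L
  obtain ⟨z₁, hz₁adj, hz₁mem, hv₁F⟩ := recolor_first' (f := f) T₁ hl₁ β
  rw [← hf₁def] at hv₁F
  -- how f' evaluates on the pieces
  have hsnotcd : s ∉ s(c, d) := by
    intro hh
    rcases Sym2.mem_iff.mp hh with rfl | rfl
    · exact hsc rfl
    · exact hds rfl
  have hne_of_mem₁ : ∀ e ∈ T₁.edges, e ≠ s(c, d) := fun e he hh => hcd₁ (hh ▸ he)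
  have hne_of_mem₂ : ∀ e ∈ T₂.edges, e ≠ s(c, d) := fun e he hh => hcd₂ (hh ▸ he)
  have hval₁ : ∀ e ∈ T₁.edges, f' e = f₁ e := by
    intro e he
    rw [hf'def, Function.update_of_ne (hne_of_mem₁ e he), hf₂def,
      recolor_not_mem (hdisjE e he)]
  have hval₂ : ∀ e ∈ T₂.edges, f' e = f₂ e := by
    intro e he
    rw [hf'def, Function.update_of_ne (hne_of_mem₂ e he)]
  have hvalcd : f' s(c, d) = !γ₂ := by rw [hf'def, Function.update_self]
  refine ⟨f', {e | e ∈ T₁.edges ∨ e ∈ T₂.edges ∨ e = s(c, d)}, T.support.toFinset.erase s,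
    ?_, ?_, ?_, ?_, ?_, ?_⟩
  · intro x hx hxs
    exact Finset.mem_erase.mpr ⟨hxs, List.mem_toFinset.mpr hx⟩
  · intro x hx
    obtain ⟨hxs, hxsup⟩ := Finset.mem_erase.mp hx
    exact ⟨hTS x (List.mem_toFinset.mp hxsup) hxs, hxs⟩
  · rintro e (he | he | rfl)
    · have heT := hsub₁ e he
      refine ⟨T.edges_subset_edgeSet heT, ?_⟩
      obtain ⟨x, hxe, hxs⟩ := edge_other_endpoint (T.edges_subset_edgeSet heT) s
      exact ⟨x, Finset.mem_erase.mpr ⟨hxs, List.mem_toFinset.mpr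
        (mem_support_of_mem_edge heT hxe)⟩, hxe⟩
    · have heT := hsub₂ e he
      refine ⟨T.edges_subset_edgeSet heT, ?_⟩
      obtain ⟨x, hxe, hxs⟩ := edge_other_endpoint (T.edges_subset_edgeSet heT) s
      exact ⟨x, Finset.mem_erase.mpr ⟨hxs, List.mem_toFinset.mpr
        (mem_support_of_mem_edge heT hxe)⟩, hxe⟩
    · exact ⟨hadj, c, Finset.mem_erase.mpr ⟨Ne.symm hsc, List.mem_toFinset.mpr
        T.end_mem_support⟩, Sym2.mem_mk_left c d⟩
  · intro e he
    simp only [Set.mem_setOf_eq, not_or] at he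
    rw [hf'def, Function.update_of_ne he.2.2, hf₂def, recolor_not_mem he.2.1, hf₁def,
      recolor_not_mem he.1]
  · intro x hx col
    obtain ⟨hxs, hxsup'⟩ := Finset.mem_erase.mp hx
    have hxsup := List.mem_toFinset.mp hxsup'
    have hmemM : ∀ y, y ∈ T.support → y ∈ T.support.toFinset.erase s ∨ y ∈ S ∨ y = s := by
      intro y hy
      by_cases hys : y = s
      · exact Or.inr (Or.inr hys)
      · exact Or.inl (Finset.mem_erase.mpr ⟨hys, List.mem_toFinset.mpr hy⟩)
    by_cases hxd : x = d
    · subst hxd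
      by_cases hcol : col = γ₁
      · refine ⟨e₁L, Or.inl he₁L, hde₁L, ?_, by rw [hval₁ _ he₁L, hv₁L, hcol]⟩
        intro y hy
        exact hmemM y (hsup₁ y (mem_support_of_mem_edge he₁L hy))
      · have hcol' : col = !γ₁ := by revert hcol; cases col <;> cases γ₁ <;> simp
        refine ⟨s(x, z₂), Or.inr (Or.inl hz₂mem), Sym2.mem_mk_left x z₂, ?_,
          by rw [hval₂ _ hz₂mem, hv₂F, hcol']⟩
        intro y hy
        exact hmemM y (hsup₂ y (mem_support_of_mem_edge hz₂mem hy))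
    · by_cases hxc : x = c
      · subst hxc
        by_cases hcol : col = γ₂
        · refine ⟨e₂L, Or.inr (Or.inl he₂L), hce₂L, ?_, by rw [hval₂ _ he₂L, hv₂L, hcol]⟩
          intro y hy
          exact hmemM y (hsup₂ y (mem_support_of_mem_edge he₂L hy))
        · have hcol' : col = !γ₂ := by revert hcol; cases col <;> cases γ₂ <;> simp
          refine ⟨s(x, d), Or.inr (Or.inr rfl), Sym2.mem_mk_left x d, ?_,
            by rw [hvalcd, hcol']⟩
          intro y hy
          rcases Sym2.mem_iff.mp hy with rfl | rfl
          · exact hmemM y hxsup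
          · exact hmemM y hdsup
      · -- interior of T₁ or of T₂
        rcases List.mem_append.mp (hsupT ▸ hxsup) with hx₁ | hx₂
        · obtain ⟨e, he, hxe, hval⟩ := recolor_interior (f := f) T₁ hT₁ hx₁ hxs hxd β col
          refine ⟨e, Or.inl he, hxe, ?_, by rw [hval₁ _ he, ← hf₁def] at *; exact hval⟩
          intro y hy
          exact hmemM y (hsup₁ y (mem_support_of_mem_edge he hy))
        · have hx₂' : x ∈ T₂.support := by
            rw [T₂.support_eq_cons]; exact List.mem_cons_of_mem _ hx₂
          obtain ⟨e, he, hxe, hval⟩ :=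
            recolor_interior (f := f₁) T₂ hT₂ hx₂' hxd hxc (!γ₁) col
          refine ⟨e, Or.inr (Or.inl he), hxe, ?_, by rw [hval₂ _ he, ← hf₂def] at *; exact hval⟩
          intro y hy
          exact hmemM y (hsup₂ y (mem_support_of_mem_edge he hy))
  · refine ⟨z₁, c, hz₁adj, ?_, Or.inl hz₁mem, by rw [hval₁ _ hz₁mem]; exact hv₁F, ?_⟩
    · exact Finset.mem_erase.mpr ⟨hz₁adj.ne', List.mem_toFinset.mpr
        (hsup₁ _ (mem_support_of_mem_edge hz₁mem (Sym2.mem_mk_right s z₁)))⟩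
    · rintro e (he | he | rfl) hse
      · exact Or.inl (edge_at_start_unique hT₁ he hz₁mem hse (Sym2.mem_mk_left s z₁))
      · exact absurd (mem_support_of_mem_edge he hse) hs₂
      · exact absurd hse hsnotcd

lemma step [Fintype V] [DecidableRel G.Adj] (hdeg : ∀ v : V, 2 ≤ G.degree v)
    (S : Finset V) (f : Sym2 V → Bool) (s : V) (β : Bool) :
    ∀ (n : ℕ) {c : V} (T : G.Walk s c), T.IsPath → 1 ≤ T.length →
      (∀ x ∈ T.support, x ≠ s → x ∉ S) →
      Fintype.card V ≤ T.length + n →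
      StepSpec G S f s β T := by
  intro n
  induction n with
  | zero =>
    intro c T hT hl hTS hcard
    exact absurd hT.length_lt (by omega)
  | succ n ih =>
    intro c T hT hl hTS hcard
    have h2 : 1 < (G.neighborFinset c).card := by
      have := hdeg c
      rw [← G.card_neighborFinset_eq_degree] at this
      omega
    obtain ⟨d₁, hd₁, d₂, hd₂, hne⟩ := Finset.one_lt_card.mp h2
    obtain ⟨d, hadj, hcd⟩ : ∃ d, G.Adj c d ∧ s(c, d) ∉ T.edges := by
      by_cases h1 : s(c, d₁) ∈ T.edges
      · refine ⟨d₂, (G.mem_neighborFinset c d₂).mp hd₂, fun h2' => hne ?_⟩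
        have heq := edge_at_end_unique hT h1 h2' (Sym2.mem_mk_left c d₁) (Sym2.mem_mk_left c d₂)
        exact Sym2.congr_right.mp heq
      · exact ⟨d₁, (G.mem_neighborFinset c d₁).mp hd₁, h1⟩
    by_cases hdS : d ∈ S ∨ d = s
    · exact anchor_gadget S f s β T hT hl hTS hadj hcd hdS
    · push_neg at hdS
      by_cases hdsup : d ∈ T.support
      · exact lollipop_gadget S f s β T hT hl hTS hadj hcd hdsup hdS.2
      · have hT' : (T.concat hadj).IsPath := isPath_concat hT hadj hdsup
        have hsub : ∀ x ∈ T.support, x ∈ (T.concat hadj).support := by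
          intro x hx
          rw [support_concat, List.mem_append]
          exact Or.inl hx
        have spec' := ih (T.concat hadj) hT' (by rw [length_concat]; omega)
            (by
              intro x hx hxs
              rw [support_concat, List.mem_append] at hx
              rcases hx with hx | hx
              · exact hTS x hx hxs
              · rw [List.mem_singleton] at hx
                subst hx
                exact hdS.1)
            (by rw [length_concat]; omega)
        obtain ⟨f', R, M, h1, h2', h3, h4, h5, h6⟩ := spec'
        exact ⟨f', R, M, fun x hx hxs => h1 x (hsub x hx) hxs, h2', h3, h4, h5, h6⟩

/-- All the vertices of `S` see both colors on edges lying inside `S`. -/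
def Happy (G : SimpleGraph V) (f : Sym2 V → Bool) (S : Finset V) : Prop :=
  ∀ v ∈ S, ∀ col : Bool, ∃ e ∈ G.incidenceSet v, (∀ y ∈ e, y ∈ S) ∧ f e = col

lemma exists_crossing (S : Finset V) :
    ∀ {x y : V}, G.Walk x y → x ∈ S → y ∉ S → ∃ a b, G.Adj a b ∧ a ∈ S ∧ b ∉ S := by
  intro x y w
  induction w with
  | nil => intro hx hy; exact absurd hx hy
  | @cons x b y h p ih =>
    intro hx hy
    by_cases hb : b ∈ S
    · exact ih hb hy
    · exact ⟨x, b, h, hx, hb⟩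

lemma mem_incidenceSet_of {e : Sym2 V} {v : V} (he : e ∈ G.edgeSet) (hv : v ∈ e) :
    e ∈ G.incidenceSet v := ⟨he, hv⟩

lemma grow [Fintype V] [DecidableRel G.Adj] (hconn : G.Connected)
    (hdeg : ∀ v : V, 2 ≤ G.degree v) (S : Finset V) (f : Sym2 V → Bool)
    (hhappy : Happy G f S) (hne : S.Nonempty) (hnu : S ≠ Finset.univ) :
    ∃ (S' : Finset V) (f' : Sym2 V → Bool), S ⊂ S' ∧ Happy G f' S' := by
  obtain ⟨y, hy⟩ : ∃ y, y ∉ S := by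
    by_contra hc
    push_neg at hc
    exact hnu (Finset.eq_univ_iff_forall.mpr hc)
  obtain ⟨x, hx⟩ := hne
  obtain ⟨w⟩ := hconn.preconnected x y
  obtain ⟨a, b, hab, haS, hbS⟩ := exists_crossing S w hx hy
  have hsupp : ∀ x₀ ∈ (Walk.cons hab (Walk.nil : G.Walk b b)).support, x₀ ≠ a → x₀ ∉ S := by
    intro x₀ hx₀ hx₀a
    simp only [support_cons, support_nil, List.mem_cons, List.mem_singleton] at hx₀
    rcases hx₀ with rfl | hx₀ | hx₀
    · exact absurd rfl hx₀a
    · subst hx₀; exact hbS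
    · simp at hx₀
  have spec := step hdeg S f a true (Fintype.card V) (Walk.cons hab Walk.nil)
      ((cons_isPath_iff hab Walk.nil).mpr ⟨IsPath.nil, by simp [hab.ne]⟩)
      (by simp) hsupp (by simp)
  obtain ⟨f', R, M, h1, h2, h3, h4, h5, -⟩ := spec
  have hbM : b ∈ M := h1 b (by simp) hab.ne'
  refine ⟨S ∪ M, f', ?_, ?_⟩
  · refine Finset.ssubset_iff_of_subset Finset.subset_union_left |>.mpr
      ⟨b, Finset.mem_union_right _ hbM, hbS⟩
  · intro v hv col
    rcases Finset.mem_union.mp hv with hvS | hvM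
    · obtain ⟨e, he, hey, hecol⟩ := hhappy v hvS col
      have heR : e ∉ R := by
        intro heR
        obtain ⟨-, x₀, hx₀M, hx₀e⟩ := h3 e heR
        exact (h2 x₀ hx₀M).1 (hey x₀ hx₀e)
      exact ⟨e, he, fun y₀ hy₀ => Finset.mem_union_left _ (hey y₀ hy₀),
        by rw [h4 e heR]; exact hecol⟩
    · obtain ⟨e, heR, hve, hey, hecol⟩ := h5 v hvM col
      refine ⟨e, mem_incidenceSet_of (h3 e heR).1 hve, ?_, hecol⟩
      intro y₀ hy₀
      rcases hey y₀ hy₀ with h | h | h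
      · exact Finset.mem_union_right _ h
      · exact Finset.mem_union_left _ h
      · subst h; exact Finset.mem_union_left _ haS

lemma seed [Fintype V] [DecidableRel G.Adj] (hdeg : ∀ v : V, 2 ≤ G.degree v) {v₃ : V}
    (h3 : 3 ≤ G.degree v₃) :
    ∃ (S : Finset V) (f : Sym2 V → Bool), S.Nonempty ∧ Happy G f S := by
  have hpos : 0 < (G.neighborFinset v₃).card := by
    rw [G.card_neighborFinset_eq_degree]; omega
  obtain ⟨u₀, hu₀⟩ := Finset.card_pos.mp hpos
  have hadj₀ : G.Adj v₃ u₀ := (G.mem_neighborFinset _ _).mp hu₀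
  have hsupp₀ : ∀ x₀ ∈ (Walk.cons hadj₀ (Walk.nil : G.Walk u₀ u₀)).support, x₀ ≠ v₃ →
      x₀ ∉ (∅ : Finset V) := by
    intro x₀ _ _
    exact Finset.notMem_empty x₀
  have spec₁ := step hdeg ∅ (fun _ => true) v₃ true (Fintype.card V) (Walk.cons hadj₀ Walk.nil)
      ((cons_isPath_iff hadj₀ Walk.nil).mpr ⟨IsPath.nil, by simp [hadj₀.ne]⟩)
      (by simp) hsupp₀ (by simp)
  obtain ⟨f₁, R₁, M₁, h1, h2, h3', h4, h5, z, c₂, hzadj, hzM, hzR, hzval, huniq⟩ := spec₁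
  have hsd : ((G.neighborFinset v₃) \ {z, c₂}).Nonempty := by
    apply Finset.card_pos.mp
    have hle := Finset.le_card_sdiff ({z, c₂} : Finset V) (G.neighborFinset v₃)
    have hc2 : ({z, c₂} : Finset V).card ≤ 2 :=
      (Finset.card_insert_le _ _).trans (by simp)
    have : 3 ≤ (G.neighborFinset v₃).card := by rwa [G.card_neighborFinset_eq_degree]
    omega
  obtain ⟨z', hz'⟩ := hsd
  rw [Finset.mem_sdiff] at hz'
  have hadj' : G.Adj v₃ z' := (G.mem_neighborFinset _ _).mp hz'.1
  have hz'ne : z' ≠ z ∧ z' ≠ c₂ := by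
    have := hz'.2
    simp only [Finset.mem_insert, Finset.mem_singleton] at this
    push_neg at this
    exact this
  have he₃R : s(v₃, z') ∉ R₁ := by
    intro hR
    rcases huniq _ hR (Sym2.mem_mk_left _ _) with hh | hh
    · exact hz'ne.1 (Sym2.congr_right.mp hh)
    · exact hz'ne.2 (Sym2.congr_right.mp hh)
  have hzz' : s(v₃, z) ≠ s(v₃, z') := fun hh => hz'ne.1 (Sym2.congr_right.mp hh).symm
  by_cases hz'M : z' ∈ M₁
  · refine ⟨insert v₃ M₁, Function.update f₁ s(v₃, z') false,
      ⟨v₃, Finset.mem_insert_self _ _⟩, ?_⟩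
    intro v hv col
    rcases Finset.mem_insert.mp hv with rfl | hvM
    · cases col with
      | true =>
        refine ⟨s(v, z), mem_incidenceSet_of hzadj (Sym2.mem_mk_left _ _), ?_,
          by rw [Function.update_of_ne (Ne.symm hzz').symm]; exact hzval⟩
        intro y hy
        rcases Sym2.mem_iff.mp hy with rfl | rfl
        · exact Finset.mem_insert_self _ _
        · exact Finset.mem_insert_of_mem hzM
      | false =>
        refine ⟨s(v, z'), mem_incidenceSet_of hadj' (Sym2.mem_mk_left _ _), ?_,
          Function.update_self _ _ _⟩
        intro y hy
        rcases Sym2.mem_iff.mp hy with rfl | rfl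
        · exact Finset.mem_insert_self _ _
        · exact Finset.mem_insert_of_mem hz'M
    · obtain ⟨e, heR, hve, hey, hecol⟩ := h5 v hvM col
      have hene : e ≠ s(v₃, z') := fun hh => he₃R (hh ▸ heR)
      refine ⟨e, mem_incidenceSet_of (h3' e heR).1 hve, ?_,
        by rw [Function.update_of_ne hene]; exact hecol⟩
      intro y hy
      rcases hey y hy with h | h | h
      · exact Finset.mem_insert_of_mem h
      · exact absurd h (Finset.notMem_empty y)
      · exact h ▸ Finset.mem_insert_self _ _
  · have hsupp' : ∀ x₀ ∈ (Walk.cons hadj' (Walk.nil : G.Walk z' z')).support, x₀ ≠ v₃ →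
        x₀ ∉ insert v₃ M₁ := by
      intro x₀ hx₀ hx₀v
      simp only [support_cons, support_nil, List.mem_cons, List.mem_singleton] at hx₀
      rcases hx₀ with rfl | hx₀ | hx₀
      · exact absurd rfl hx₀v
      · subst hx₀
        intro hmem
        rcases Finset.mem_insert.mp hmem with hh | hh
        · exact hadj'.ne' hh
        · exact hz'M hh
      · simp at hx₀
    have spec₂ := step hdeg (insert v₃ M₁) f₁ v₃ false (Fintype.card V)
        (Walk.cons hadj' Walk.nil)
        ((cons_isPath_iff hadj' Walk.nil).mpr ⟨IsPath.nil, by simp [hadj'.ne]⟩)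
        (by simp) hsupp' (by simp)
    obtain ⟨f₂, R₂, M₂, g1, g2, g3, g4, g5, w, c₄, hwadj, hwM, hwR, hwval, -⟩ := spec₂
    have hR₂fix : ∀ e : Sym2 V, (∀ y ∈ e, y ∈ insert v₃ M₁) → e ∉ R₂ := by
      intro e hey heR
      obtain ⟨-, x₀, hx₀M₂, hx₀e⟩ := g3 e heR
      exact (g2 x₀ hx₀M₂).1 (hey x₀ hx₀e)
    refine ⟨insert v₃ (M₁ ∪ M₂), f₂, ⟨v₃, Finset.mem_insert_self _ _⟩, ?_⟩
    intro v hv col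
    rcases Finset.mem_insert.mp hv with rfl | hvM
    · cases col with
      | true =>
        have heyz : ∀ y ∈ s(v, z), y ∈ insert v M₁ := by
          intro y hy
          rcases Sym2.mem_iff.mp hy with rfl | rfl
          · exact Finset.mem_insert_self _ _
          · exact Finset.mem_insert_of_mem hzM
        refine ⟨s(v, z), mem_incidenceSet_of hzadj (Sym2.mem_mk_left _ _), ?_,
          by rw [g4 _ (hR₂fix _ heyz)]; exact hzval⟩
        intro y hy
        rcases Sym2.mem_iff.mp hy with rfl | rfl
        · exact Finset.mem_insert_self _ _
        · exact Finset.mem_insert_of_mem (Finset.mem_union_left _ hzM)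
      | false =>
        refine ⟨s(v, w), mem_incidenceSet_of hwadj (Sym2.mem_mk_left _ _), ?_, hwval⟩
        intro y hy
        rcases Sym2.mem_iff.mp hy with rfl | rfl
        · exact Finset.mem_insert_self _ _
        · exact Finset.mem_insert_of_mem (Finset.mem_union_right _ hwM)
    · rcases Finset.mem_union.mp hvM with hv₁ | hv₂
      · obtain ⟨e, heR, hve, hey, hecol⟩ := h5 v hv₁ col
        have hey' : ∀ y ∈ e, y ∈ insert v₃ M₁ := by
          intro y hy
          rcases hey y hy with h | h | h
          · exact Finset.mem_insert_of_mem h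
          · exact absurd h (Finset.notMem_empty y)
          · exact h ▸ Finset.mem_insert_self _ _
        refine ⟨e, mem_incidenceSet_of (h3' e heR).1 hve, ?_,
          by rw [g4 _ (hR₂fix _ hey')]; exact hecol⟩
        intro y hy
        rcases Finset.mem_insert.mp (hey' y hy) with h | h
        · exact h ▸ Finset.mem_insert_self _ _
        · exact Finset.mem_insert_of_mem (Finset.mem_union_left _ h)
      · obtain ⟨e, heR, hve, hey, hecol⟩ := g5 v hv₂ col
        refine ⟨e, mem_incidenceSet_of (g3 e heR).1 hve, ?_, hecol⟩
        intro y hy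
        rcases hey y hy with h | h | h
        · exact Finset.mem_insert_of_mem (Finset.mem_union_right _ h)
        · rcases Finset.mem_insert.mp h with h' | h'
          · exact h' ▸ Finset.mem_insert_self _ _
          · exact Finset.mem_insert_of_mem (Finset.mem_union_left _ h')
        · exact h ▸ Finset.mem_insert_self _ _

lemma reach [Fintype V] [DecidableRel G.Adj] (hconn : G.Connected)
    (hdeg : ∀ v : V, 2 ≤ G.degree v) :
    ∀ (n : ℕ) (S : Finset V) (f : Sym2 V → Bool), Happy G f S → S.Nonempty →
      (Finset.univ : Finset V).card - S.card ≤ n → ∃ f', Happy G f' Finset.univ := by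
  intro n
  induction n with
  | zero =>
    intro S f hf hne hc
    have : S = Finset.univ := by
      apply Finset.eq_univ_of_card
      have := Finset.card_le_univ S
      rw [Finset.card_univ] at *
      omega
    exact ⟨f, this ▸ hf⟩
  | succ n ih =>
    intro S f hf hne hc
    by_cases hS : S = Finset.univ
    · exact ⟨f, hS ▸ hf⟩
    · obtain ⟨S', f', hlt, hf'⟩ := grow hconn hdeg S f hf hne hS
      have hcard := Finset.card_lt_card hlt
      have hle := Finset.card_le_univ S'
      exact ih S' f' hf' (hne.mono hlt.subset) (by omega)

theorem main_result {V : Type*} [Fintype V] [DecidableEq V] (G : SimpleGraph V)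
    [DecidableRel G.Adj] (hconn : G.Connected)
    (hdeg : ∀ v : V, 2 ≤ G.degree v) (hmax : ∃ v : V, 3 ≤ G.degree v) :
    ∃ f : Sym2 V → Bool, ∀ v : V,
      (∃ e ∈ G.incidenceSet v, f e = true) ∧ (∃ e ∈ G.incidenceSet v, f e = false) := by
  obtain ⟨v₃, h3⟩ := hmax
  obtain ⟨S₀, f₀, hne₀, hf₀⟩ := seed hdeg h3
  obtain ⟨f, hf⟩ := reach hconn hdeg ((Finset.univ : Finset V).card - S₀.card) S₀ f₀ hf₀ hne₀ le_rfl
  refine ⟨f, fun v => ?_⟩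
  obtain ⟨e₁, he₁, -, hc₁⟩ := hf v (Finset.mem_univ v) true
  obtain ⟨e₂, he₂, -, hc₂⟩ := hf v (Finset.mem_univ v) false
  exact ⟨⟨e₁, he₁, hc₁⟩, ⟨e₂, he₂, hc₂⟩⟩

end NAEColoringProof

/-- A finite connected simple graph in which every vertex has degree at
least 2 and some vertex has degree at least 3 has a NAE edge coloring. -/
theorem stmt_12 {V : Type*} [Fintype V] [DecidableEq V] (G : SimpleGraph V)
    [DecidableRel G.Adj] (hconn : G.Connected)
    (hdeg : ∀ v : V, 2 ≤ G.degree v) (hmax : ∃ v : V, 3 ≤ G.degree v) :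
    ∃ f : Sym2 V → Bool, ∀ v : V,
      (∃ e ∈ G.incidenceSet v, f e = true) ∧ (∃ e ∈ G.incidenceSet v, f e = false) := by
  exact NAEColoringProof.main_result G hconn hdeg hmax
end

section
/- Let G be a finite 3-regular bipartite simple graph. Then G has a zero-sum vertex 3-flow if and only if G has a 1-in-Degree decomposition. -/
lemma zsv3_key (x y z : ℤ)
    (hx : x = -2 ∨ x = -1 ∨ x = 1 ∨ x = 2)
    (hy : y = -2 ∨ y = -1 ∨ y = 1 ∨ y = 2)
    (hz : z = -2 ∨ z = -1 ∨ z = 1 ∨ z = 2)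
    (h : x + y + z = 0) :
    ((x = 2 ∨ x = -2) ∧ ¬(y = 2 ∨ y = -2) ∧ ¬(z = 2 ∨ z = -2)) ∨
    (¬(x = 2 ∨ x = -2) ∧ (y = 2 ∨ y = -2) ∧ ¬(z = 2 ∨ z = -2)) ∨
    (¬(x = 2 ∨ x = -2) ∧ ¬(y = 2 ∨ y = -2) ∧ (z = 2 ∨ z = -2)) := by
  omega

/-- A finite 3-regular bipartite simple graph has a zero-sum vertex
3-flow iff it has a 1-in-Degree decomposition (a set `A` of vertices such that every
vertex has exactly one neighbor in `A`). -/
theorem stmt_15 {V : Type*} [Fintype V] [DecidableEq V] (G : SimpleGraph V)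
    [DecidableRel G.Adj] (hreg : G.IsRegularOfDegree 3)
    (hbip : ∃ X : Set V, ∀ u v : V, G.Adj u v → (u ∈ X ↔ v ∉ X)) :
    (∃ f : V → ℤ, (∀ v : V, f v ∈ ({-2, -1, 1, 2} : Set ℤ)) ∧
      ∀ v : V, ∑ u ∈ G.neighborFinset v, f u = 0) ↔
    ∃ A : Set V, ∀ v : V, ∃! u : V, G.Adj v u ∧ u ∈ A := by
  classical
  constructor
  · rintro ⟨f, hf, hsum⟩
    refine ⟨{u | f u = 2 ∨ f u = -2}, fun v => ?_⟩
    obtain ⟨a, b, c, hab, hac, hbc, habc⟩ := Finset.card_eq_three.mp (hreg v)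
    have adj_iff : ∀ u, G.Adj v u ↔ (u = a ∨ u = b ∨ u = c) := fun u => by
      rw [← SimpleGraph.mem_neighborFinset, habc]; simp
    have hma : G.Adj v a := (adj_iff a).2 (Or.inl rfl)
    have hmb : G.Adj v b := (adj_iff b).2 (Or.inr (Or.inl rfl))
    have hmc : G.Adj v c := (adj_iff c).2 (Or.inr (Or.inr rfl))
    have hsum' : f a + f b + f c = 0 := by
      have h := hsum v
      rw [habc, Finset.sum_insert (by simp [hab, hac]),
        Finset.sum_insert (by simp [hbc]), Finset.sum_singleton] at h
      linarith
    have hfa := hf a; have hfb := hf b; have hfc := hf c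
    simp only [Set.mem_insert_iff, Set.mem_singleton_iff] at hfa hfb hfc
    rcases zsv3_key _ _ _ hfa hfb hfc hsum' with ⟨h1, h2, h3⟩ | ⟨h1, h2, h3⟩ | ⟨h1, h2, h3⟩
    · exact ⟨a, ⟨hma, h1⟩, fun u ⟨hu, hA⟩ => by
        rcases (adj_iff u).1 hu with rfl | rfl | rfl
        · rfl
        · exact absurd hA h2
        · exact absurd hA h3⟩
    · exact ⟨b, ⟨hmb, h2⟩, fun u ⟨hu, hA⟩ => by
        rcases (adj_iff u).1 hu with rfl | rfl | rfl
        · exact absurd hA h1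
        · rfl
        · exact absurd hA h3⟩
    · exact ⟨c, ⟨hmc, h3⟩, fun u ⟨hu, hA⟩ => by
        rcases (adj_iff u).1 hu with rfl | rfl | rfl
        · exact absurd hA h1
        · exact absurd hA h2
        · rfl⟩
  · rintro ⟨A, hA⟩
    obtain ⟨X, hX⟩ := hbip
    refine ⟨fun v => if v ∈ A then (if v ∈ X then 2 else -2)
        else (if v ∈ X then -1 else 1), fun v => ?_, fun v => ?_⟩
    · by_cases h1 : v ∈ A <;> by_cases h2 : v ∈ X <;> simp [h1, h2]
    · obtain ⟨a, b, c, hab, hac, hbc, habc⟩ := Finset.card_eq_three.mp (hreg v)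
      have adj_iff : ∀ u, G.Adj v u ↔ (u = a ∨ u = b ∨ u = c) := fun u => by
        rw [← SimpleGraph.mem_neighborFinset, habc]; simp
      have hma : G.Adj v a := (adj_iff a).2 (Or.inl rfl)
      have hmb : G.Adj v b := (adj_iff b).2 (Or.inr (Or.inl rfl))
      have hmc : G.Adj v c := (adj_iff c).2 (Or.inr (Or.inr rfl))
      have hXa : a ∈ X ↔ v ∉ X := hX a v hma.symm
      have hXb : b ∈ X ↔ v ∉ X := hX b v hmb.symm
      have hXc : c ∈ X ↔ v ∉ X := hX c v hmc.symm
      rw [habc, Finset.sum_insert (by simp [hab, hac]),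
        Finset.sum_insert (by simp [hbc]), Finset.sum_singleton]
      obtain ⟨u, ⟨huadj, huA⟩, huniq⟩ := hA v
      rcases (adj_iff u).1 huadj with rfl | rfl | rfl
      · have hbA : b ∉ A := fun h => hab (huniq b ⟨hmb, h⟩).symm
        have hcA : c ∉ A := fun h => hac (huniq c ⟨hmc, h⟩).symm
        by_cases hv : v ∈ X <;> simp [huA, hbA, hcA, hXa, hXb, hXc, hv]
      · have haA : a ∉ A := fun h => hab (huniq a ⟨hma, h⟩)
        have hcA : c ∉ A := fun h => hbc (huniq c ⟨hmc, h⟩).symm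
        by_cases hv : v ∈ X <;> simp [huA, haA, hcA, hXa, hXb, hXc, hv]
      · have haA : a ∉ A := fun h => hac (huniq a ⟨hma, h⟩)
        have hbA : b ∉ A := fun h => hbc (huniq b ⟨hmb, h⟩)
        by_cases hv : v ∈ X <;> simp [huA, haA, hbA, hXa, hXb, hXc, hv]
end
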